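/- arXiv:1403.5652 — 2 statements merged into one kernel-verified Lean document; each statement's English description precedes it below -/
import Mathlib

section
/- Let A, B, C be affinely independent points in ℝ². If each side of triangle ABC is trisected and each trisection point is joined to the opposite vertex, then the central hexagon formed by these six cevians has area one-tenth the area of triangle ABC (Marion Walter's theorem). -/
def detv (u v : ℝ × ℝ) : ℝ := u.1 * v.2 - u.2 * v.1

noncomputable def area3 (P Q R : ℝ × ℝ) : ℝ := |detv (Q - P) (R - P)| / 2

def lineTh (P Q : ℝ × ℝ) : Set (ℝ × ℝ) := {X | ∃ t : ℝ, X = P + t • (Q - P)}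

/-!
Two cevians meet at a point whose barycentric coordinates are explicit rational functions of the
ratios in which they divide the sides, so all six vertices of the hexagon are explicit, e.g.
`I = A/4 + B/2 + C/4`. Fanning the hexagon out from `I`, each of the four triangles has area
`|det|` of barycentric coordinate differences times the area of `ABC`, namely `1/80`, `3/80`,
`3/80` and `1/80`, which sum to `1/10`.
-/

lemma detv_smul_left (a : ℝ) (u v : ℝ × ℝ) : detv (a • u) v = a * detv u v := by
  simp only [detv, Prod.smul_fst, Prod.smul_snd, smul_eq_mul]; ring

lemma detv_self (u : ℝ × ℝ) : detv u u = 0 := by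
  simp only [detv]; ring

lemma detv_sub_sub_rotate (A B C : ℝ × ℝ) : detv (C - B) (A - B) = detv (B - A) (C - A) := by
  simp only [detv, Prod.fst_sub, Prod.snd_sub]; ring

lemma detv_add_smul_smul_sub (a b c : ℝ) (u v : ℝ × ℝ) :
    detv (a • u + b • v) (c • v - u) = (a * c + b) * detv u v := by
  simp only [detv, Prod.fst_add, Prod.snd_add, Prod.fst_sub, Prod.snd_sub, Prod.smul_fst,
    Prod.smul_snd, smul_eq_mul]; ring

lemma eq_zero_of_smul_eq_smul_of_detv_ne_zero {u v : ℝ × ℝ} (h : detv u v ≠ 0) {a b : ℝ}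
    (hab : a • u = b • v) : a = 0 := by
  have : a * detv u v = 0 := by
    rw [← detv_smul_left, hab, detv_smul_left, detv_self, mul_zero]
  exact (mul_eq_zero.1 this).resolve_right h

lemma eq_of_mem_lineTh_inter {P Q R S X Y : ℝ × ℝ} (h : detv (Q - P) (S - R) ≠ 0)
    (hX : X ∈ lineTh P Q ∩ lineTh R S) (hY : Y ∈ lineTh P Q ∩ lineTh R S) : X = Y := by
  obtain ⟨⟨t, rfl⟩, r, hr⟩ := hX
  obtain ⟨⟨t', rfl⟩, r', hr'⟩ := hY
  have : (t - t') • (Q - P) = (r - r') • (S - R) := by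
    linear_combination (norm := module) hr - hr'
  rw [sub_eq_zero.1 (eq_zero_of_smul_eq_smul_of_detv_ne_zero h this)]

lemma eq_of_mem_cevian_inter {X Y Z P Q O : ℝ × ℝ} {a b c d : ℝ}
    (hXYZ : detv (Y - X) (Z - X) ≠ 0) (hP : P = a • Y + b • Z) (hab : a + b = 1)
    (hQ : Q = c • Z + d • X) (hcd : c + d = 1) (hD : a * c + b ≠ 0)
    (hO : O ∈ lineTh X P ∩ lineTh Y Q) :
    O = (b * d / (a * c + b)) • X + (a * c / (a * c + b)) • Y + (b * c / (a * c + b)) • Z := by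
  subst hP hQ
  refine eq_of_mem_lineTh_inter ?_ hO ⟨⟨c / (a * c + b), ?_⟩, b / (a * c + b), ?_⟩
  · have hP : a • Y + b • Z - X = a • (Y - X) + b • (Z - X) := by
      linear_combination (norm := module) hab • X
    have hQ : c • Z + d • X - Y = c • (Z - X) - (Y - X) := by
      linear_combination (norm := module) hcd • X
    rw [hP, hQ, detv_add_smul_smul_sub]
    exact mul_ne_zero hD hXYZ
  · match_scalars <;> field_simp
    linear_combination b * hcd - c * hab
  · match_scalars <;> field_simp
    ring

lemma area3_eq_mul_area3 {P Q R A B C : ℝ × ℝ} {k : ℝ} (hk : 0 ≤ k)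
    (h : detv (Q - P) (R - P) = k * detv (B - A) (C - A)) : area3 P Q R = k * area3 A B C := by
  rw [area3, area3, h, abs_mul, abs_of_nonneg hk, mul_div_assoc]

/-- Marion Walter's theorem: the central hexagon formed by joining the trisection
points of the sides to the opposite vertices has one tenth the triangle's area. -/
theorem marion_walter (A B C : ℝ × ℝ) (hind : detv (B - A) (C - A) ≠ 0)
    (P1 P2 Q1 Q2 R1 R2 : ℝ × ℝ)
    (hP1 : P1 = ((2 : ℝ) / 3) • B + ((1 : ℝ) / 3) • C)
    (hP2 : P2 = ((1 : ℝ) / 3) • B + ((2 : ℝ) / 3) • C)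
    (hQ1 : Q1 = ((2 : ℝ) / 3) • C + ((1 : ℝ) / 3) • A)
    (hQ2 : Q2 = ((1 : ℝ) / 3) • C + ((2 : ℝ) / 3) • A)
    (hR1 : R1 = ((2 : ℝ) / 3) • A + ((1 : ℝ) / 3) • B)
    (hR2 : R2 = ((1 : ℝ) / 3) • A + ((2 : ℝ) / 3) • B)
    (I J K L M N : ℝ × ℝ)
    (hI : I ∈ lineTh A P1 ∩ lineTh C R2)
    (hJ : J ∈ lineTh B Q1 ∩ lineTh C R2)
    (hK : K ∈ lineTh B Q1 ∩ lineTh A P2)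
    (hL : L ∈ lineTh C R1 ∩ lineTh A P2)
    (hM : M ∈ lineTh B Q2 ∩ lineTh C R1)
    (hN : N ∈ lineTh A P1 ∩ lineTh B Q2) :
    area3 I J K + area3 I K L + area3 I L M + area3 I M N =
      (1 / 10) * area3 A B C := by
  have hBCA : detv (C - B) (A - B) ≠ 0 := by rwa [detv_sub_sub_rotate]
  have hCAB : detv (A - C) (B - C) ≠ 0 := by rwa [detv_sub_sub_rotate, detv_sub_sub_rotate]
  have hI' := eq_of_mem_cevian_inter hCAB hR2 (by norm_num) hP1 (by norm_num) (by norm_num)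
    ⟨hI.2, hI.1⟩
  have hJ' := eq_of_mem_cevian_inter hBCA hQ1 (by norm_num) hR2 (by norm_num) (by norm_num) hJ
  have hK' := eq_of_mem_cevian_inter hind hP2 (by norm_num) hQ1 (by norm_num) (by norm_num)
    ⟨hK.2, hK.1⟩
  have hL' := eq_of_mem_cevian_inter hCAB hR1 (by norm_num) hP2 (by norm_num) (by norm_num) hL
  have hM' := eq_of_mem_cevian_inter hBCA hQ2 (by norm_num) hR1 (by norm_num) (by norm_num) hM
  have hN' := eq_of_mem_cevian_inter hind hP1 (by norm_num) hQ2 (by norm_num) (by norm_num) hN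
  rw [show area3 I J K = 1 / 80 * area3 A B C from area3_eq_mul_area3 (by norm_num) ?IJK,
    show area3 I K L = 3 / 80 * area3 A B C from area3_eq_mul_area3 (by norm_num) ?IKL,
    show area3 I L M = 3 / 80 * area3 A B C from area3_eq_mul_area3 (by norm_num) ?ILM,
    show area3 I M N = 1 / 80 * area3 A B C from area3_eq_mul_area3 (by norm_num) ?IMN]
  · ring
  all_goals
    simp only [hI', hJ', hK', hL', hM', hN', detv, Prod.fst_add, Prod.snd_add, Prod.fst_sub,
      Prod.snd_sub, Prod.smul_fst, Prod.smul_snd, smul_eq_mul]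
    ring
end

section
/- Let n ≥ 4 be even and A₁, A₂, A₃ affinely independent points in ℝ². Divide each side of the triangle into n equal parts and draw the cevians from each vertex to the 1st and (n−1)-th division points of the opposite side. The central hexagon formed by these six cevians has area 2(n−2)²/((n+1)(2n−1)) times the area of the triangle. -/
/-- The j-th of the n equal division points of the segment PQ. -/
noncomputable def divpt (n j : ℕ) (P Q : ℝ × ℝ) : ℝ × ℝ :=
  (((n : ℝ) - j) / n) • P + ((j : ℝ) / n) • Q

/-! In barycentric coordinates with respect to `A1 A2 A3`, the cevian from one vertex to
`(0 : b : c)` and the cevian from another vertex to `(a : b : 0)` meet at `(a : b : c)`. Hence the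
hexagon has vertices `(1 : n-1 : 1)`, `(1 : n-1 : n-1)` and their cyclic shifts. A triangle whose
vertices have barycentric coordinates `p, q, r` has `|det (p; q; r)| / (Σp Σq Σr)` times the area of
the reference triangle. Fanning the hexagon out from `I` gives four triangles with area ratios
`c, n c, n c, c` where `c = (n-2)² / ((n+1)² (2n-1))`, and these add up to
`2 (n-2)² / ((n+1) (2n-1))`. -/

lemma detv_smul_add_smul (u v : ℝ × ℝ) (a b c d : ℝ) :
    detv (a • u + b • v) (c • u + d • v) = (a * d - b * c) * detv u v := by
  simp only [detv, Prod.fst_add, Prod.snd_add, Prod.smul_fst, Prod.smul_snd, smul_eq_mul]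
  ring

lemma detv_sub_rotate (P Q R : ℝ × ℝ) : detv (R - Q) (P - Q) = detv (Q - P) (R - P) := by
  simp only [detv, Prod.fst_sub, Prod.snd_sub]
  ring

lemma eq_zero_of_smul_add_smul_eq_zero {u v : ℝ × ℝ} (huv : detv u v ≠ 0) {a b : ℝ}
    (h : a • u + b • v = 0) : a = 0 := by
  have key := detv_smul_add_smul u v a b 0 1
  rw [h] at key
  have hzero : (a * 1 - b * 0) * detv u v = 0 := by rw [← key]; simp [detv]
  simpa [huv] using hzero

lemma lineTh_inter_subsingleton {P D R E : ℝ × ℝ} (h : detv (D - P) (E - R) ≠ 0) :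
    (lineTh P D ∩ lineTh R E).Subsingleton := by
  rintro X ⟨⟨t, hXt⟩, ⟨s, hXs⟩⟩ Y ⟨⟨t', hYt⟩, ⟨s', hYs⟩⟩
  have hlin : (t - t') • (D - P) + (s' - s) • (E - R) = 0 := by
    linear_combination (norm := module) hXt.symm.trans hXs - hYt.symm.trans hYs
  have htt' : t = t' := sub_eq_zero.1 (eq_zero_of_smul_add_smul_eq_zero h hlin)
  rw [hXt, hYt, htt']

/-- The point with homogeneous barycentric coordinates `(a : b : c)` with respect to `P Q R`;
it is junk (the origin) when `a + b + c = 0`. -/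
noncomputable def bary (a b c : ℝ) (P Q R : ℝ × ℝ) : ℝ × ℝ :=
  (a + b + c)⁻¹ • (a • P + b • Q + c • R)

lemma bary_rotate (a b c : ℝ) (P Q R : ℝ × ℝ) : bary a b c Q R P = bary c a b P Q R := by
  simp only [bary]
  rw [show c + a + b = a + b + c by ring]
  congr 1
  abel

lemma bary_sub_bary {a b c a' b' c' : ℝ} (h : a + b + c ≠ 0) (h' : a' + b' + c' ≠ 0)
    (P Q R : ℝ × ℝ) :
    bary a b c P Q R - bary a' b' c' P Q R =
      (b / (a + b + c) - b' / (a' + b' + c')) • (Q - P) +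
        (c / (a + b + c) - c' / (a' + b' + c')) • (R - P) := by
  simp only [bary]
  match_scalars <;> field_simp
  ring

lemma det_fin_three_of {R : Type*} [CommRing R] (a b c d e f g h i : R) :
    !![a, b, c; d, e, f; g, h, i].det =
      a * e * i - a * f * h - b * d * i + b * f * g + c * d * h - c * e * g := by
  rw [Matrix.det_fin_three]
  rfl

lemma area3_bary {a b c a' b' c' a'' b'' c'' : ℝ} (h : a + b + c ≠ 0) (h' : a' + b' + c' ≠ 0)
    (h'' : a'' + b'' + c'' ≠ 0) (P Q R : ℝ × ℝ) :
    area3 (bary a b c P Q R) (bary a' b' c' P Q R) (bary a'' b'' c'' P Q R) =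
      |!![a, b, c; a', b', c'; a'', b'', c''].det /
        ((a + b + c) * (a' + b' + c') * (a'' + b'' + c''))| * area3 P Q R := by
  have hcoef : (b' / (a' + b' + c') - b / (a + b + c)) * (c'' / (a'' + b'' + c'') - c / (a + b + c)) -
      (c' / (a' + b' + c') - c / (a + b + c)) * (b'' / (a'' + b'' + c'') - b / (a + b + c)) =
      !![a, b, c; a', b', c'; a'', b'', c''].det /
        ((a + b + c) * (a' + b' + c') * (a'' + b'' + c'')) := by
    rw [det_fin_three_of]
    field_simp
    ring
  simp only [area3]
  rw [bary_sub_bary h' h, bary_sub_bary h'' h, detv_smul_add_smul, hcoef, abs_mul, mul_div_assoc]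

lemma area3_bary_eq_mul {a b c a' b' c' a'' b'' c'' r : ℝ} (hr : 0 ≤ r) (h : a + b + c ≠ 0)
    (h' : a' + b' + c' ≠ 0) (h'' : a'' + b'' + c'' ≠ 0)
    (hdet : !![a, b, c; a', b', c'; a'', b'', c''].det =
      r * ((a + b + c) * (a' + b' + c') * (a'' + b'' + c''))) (P Q R : ℝ × ℝ) :
    area3 (bary a b c P Q R) (bary a' b' c' P Q R) (bary a'' b'' c'' P Q R) = r * area3 P Q R := by
  rw [area3_bary h h' h'', hdet, mul_div_cancel_right₀ _ (mul_ne_zero (mul_ne_zero h h') h''),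
    abs_of_nonneg hr]

lemma bary_mem_lineTh_bary_zero {a b c : ℝ} (hbc : b + c ≠ 0) (habc : a + b + c ≠ 0)
    (P Q R : ℝ × ℝ) : bary a b c P Q R ∈ lineTh P (bary 0 b c P Q R) := by
  refine ⟨(b + c) / (a + b + c), ?_⟩
  simp only [bary, zero_add]
  match_scalars <;> field_simp
  ring

lemma eq_bary_of_mem_cevians {a b c : ℝ} (hb : b ≠ 0) (hab : a + b ≠ 0) (hbc : b + c ≠ 0)
    (habc : a + b + c ≠ 0) {P Q R X : ℝ × ℝ} (hPQR : detv (Q - P) (R - P) ≠ 0)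
    (hXP : X ∈ lineTh P (bary 0 b c P Q R)) (hXR : X ∈ lineTh R (bary a b 0 P Q R)) :
    X = bary a b c P Q R := by
  have hP : P = bary 1 0 0 P Q R := by simp [bary]
  have hR : R = bary 0 0 1 P Q R := by simp [bary]
  have hdir : detv (bary 0 b c P Q R - P) (bary a b 0 P Q R - R) ≠ 0 := by
    have hcoef : (b / (0 + b + c) - 0 / (1 + 0 + 0)) * (0 / (a + b + 0) - 1 / (0 + 0 + 1)) -
        (c / (0 + b + c) - 0 / (1 + 0 + 0)) * (b / (a + b + 0) - 0 / (0 + 0 + 1)) =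
        -(b * (a + b + c) / ((b + c) * (a + b))) := by
      simp only [add_zero, zero_add, zero_div, sub_zero, div_one, zero_sub]
      field_simp
      ring
    nth_rw 2 [hP]
    nth_rw 4 [hR]
    rw [bary_sub_bary (by simpa) (by simp), bary_sub_bary (by simpa) (by simp),
      detv_smul_add_smul, hcoef]
    exact mul_ne_zero (by simp [hb, hab, hbc, habc]) hPQR
  have hmemR : bary a b c P Q R ∈ lineTh R (bary a b 0 P Q R) := by
    rw [bary_rotate a b c R P Q, bary_rotate a b 0 R P Q]
    exact bary_mem_lineTh_bary_zero hab (by convert habc using 1; ring) R P Q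
  exact lineTh_inter_subsingleton hdir ⟨hXP, hXR⟩ ⟨bary_mem_lineTh_bary_zero hbc habc P Q R, hmemR⟩

lemma divpt_eq_bary (n j : ℕ) (P Q R : ℝ × ℝ) : divpt n j Q R = bary 0 (n - j) j P Q R := by
  simp only [divpt, bary, zero_add, sub_add_cancel, zero_smul]
  match_scalars <;> ring

lemma eq_bary_of_mem_cevians_near_vertex {n : ℕ} (hn : 2 ≤ n) {P Q R X : ℝ × ℝ}
    (hPQR : detv (Q - P) (R - P) ≠ 0) (hXP : X ∈ lineTh P (divpt n 1 Q R))
    (hXR : X ∈ lineTh R (divpt n (n - 1) P Q)) : X = bary 1 (n - 1) 1 P Q R := by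
  have hn' : (2 : ℝ) ≤ n := by exact_mod_cast hn
  rw [divpt_eq_bary n 1 P, Nat.cast_one] at hXP
  rw [divpt_eq_bary n (n - 1) R, Nat.cast_pred (by omega), sub_sub_cancel, ← bary_rotate] at hXR
  refine eq_bary_of_mem_cevians ?_ ?_ ?_ ?_ hPQR hXP hXR <;> apply ne_of_gt <;> linarith

lemma eq_bary_of_mem_cevians_near_edge {n : ℕ} (hn : 1 ≤ n) {P Q R X : ℝ × ℝ}
    (hPQR : detv (Q - P) (R - P) ≠ 0) (hXQ : X ∈ lineTh Q (divpt n 1 R P))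
    (hXR : X ∈ lineTh R (divpt n (n - 1) P Q)) : X = bary 1 (n - 1) (n - 1) P Q R := by
  have hn' : (1 : ℝ) ≤ n := by exact_mod_cast hn
  rw [divpt_eq_bary n 1 Q, Nat.cast_one, ← bary_rotate] at hXQ
  rw [divpt_eq_bary n (n - 1) R, Nat.cast_pred (by omega), sub_sub_cancel] at hXR
  rw [← detv_sub_rotate, ← detv_sub_rotate] at hPQR
  have hX : X = bary (n - 1) 1 (n - 1) R P Q := by
    refine eq_bary_of_mem_cevians ?_ ?_ ?_ ?_ hPQR hXR hXQ <;> apply ne_of_gt <;> linarith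
  rw [hX, bary_rotate, bary_rotate]

lemma area3_hexagon_bary {x : ℝ} (hx : 1 / 2 < x) (P Q R : ℝ × ℝ) :
    area3 (bary 1 (x - 1) 1 P Q R) (bary 1 (x - 1) (x - 1) P Q R) (bary 1 1 (x - 1) P Q R) +
      area3 (bary 1 (x - 1) 1 P Q R) (bary 1 1 (x - 1) P Q R) (bary (x - 1) 1 (x - 1) P Q R) +
      area3 (bary 1 (x - 1) 1 P Q R) (bary (x - 1) 1 (x - 1) P Q R) (bary (x - 1) 1 1 P Q R) +
      area3 (bary 1 (x - 1) 1 P Q R) (bary (x - 1) 1 1 P Q R) (bary (x - 1) (x - 1) 1 P Q R) =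
      2 * (x - 2) ^ 2 / ((x + 1) * (2 * x - 1)) * area3 P Q R := by
  have h2x : 0 < 2 * x - 1 := by linarith
  have hden : (x + 1) ^ 2 * (2 * x - 1) ≠ 0 := by positivity
  have hr₁ : 0 ≤ (x - 2) ^ 2 / ((x + 1) ^ 2 * (2 * x - 1)) := by positivity
  have hr₂ : 0 ≤ x * (x - 2) ^ 2 / ((x + 1) ^ 2 * (2 * x - 1)) := by
    have hx₀ : 0 ≤ x := by linarith
    positivity
  rw [area3_bary_eq_mul hr₁, area3_bary_eq_mul hr₂, area3_bary_eq_mul hr₂, area3_bary_eq_mul hr₁]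
  · field_simp
    ring
  all_goals first
    | exact ne_of_gt (by linarith)
    | rw [div_mul_eq_mul_div, eq_div_iff hden, det_fin_three_of]
      ring

theorem hexagon_even_general (n : ℕ) (hn : 4 ≤ n)
    (A1 A2 A3 : ℝ × ℝ) (hind : detv (A2 - A1) (A3 - A1) ≠ 0)
    (I J K L M N : ℝ × ℝ)
    (hI : I ∈ lineTh A1 (divpt n 1 A2 A3) ∩ lineTh A3 (divpt n (n - 1) A1 A2))
    (hJ : J ∈ lineTh A2 (divpt n 1 A3 A1) ∩ lineTh A3 (divpt n (n - 1) A1 A2))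
    (hK : K ∈ lineTh A2 (divpt n 1 A3 A1) ∩ lineTh A1 (divpt n (n - 1) A2 A3))
    (hL : L ∈ lineTh A3 (divpt n 1 A1 A2) ∩ lineTh A1 (divpt n (n - 1) A2 A3))
    (hM : M ∈ lineTh A2 (divpt n (n - 1) A3 A1) ∩ lineTh A3 (divpt n 1 A1 A2))
    (hN : N ∈ lineTh A1 (divpt n 1 A2 A3) ∩ lineTh A2 (divpt n (n - 1) A3 A1)) :
    area3 I J K + area3 I K L + area3 I L M + area3 I M N =
      2 * ((n : ℝ) - 2) ^ 2 / (((n : ℝ) + 1) * (2 * n - 1)) * area3 A1 A2 A3 := by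
  have hind₂ : detv (A3 - A2) (A1 - A2) ≠ 0 := by rwa [detv_sub_rotate]
  have hind₃ : detv (A1 - A3) (A2 - A3) ≠ 0 := by rwa [detv_sub_rotate, detv_sub_rotate]
  have hI' : I = bary 1 (n - 1) 1 A1 A2 A3 :=
    eq_bary_of_mem_cevians_near_vertex (by omega) hind hI.1 hI.2
  have hJ' : J = bary 1 (n - 1) (n - 1) A1 A2 A3 :=
    eq_bary_of_mem_cevians_near_edge (by omega) hind hJ.1 hJ.2
  have hK' : K = bary 1 1 (n - 1) A1 A2 A3 := by
    rw [eq_bary_of_mem_cevians_near_vertex (by omega) hind₂ hK.1 hK.2, bary_rotate]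
  have hL' : L = bary (n - 1) 1 (n - 1) A1 A2 A3 := by
    rw [eq_bary_of_mem_cevians_near_edge (by omega) hind₂ hL.1 hL.2, bary_rotate]
  have hM' : M = bary (n - 1) 1 1 A1 A2 A3 := by
    rw [eq_bary_of_mem_cevians_near_vertex (by omega) hind₃ hM.2 hM.1, bary_rotate, bary_rotate]
  have hN' : N = bary (n - 1) (n - 1) 1 A1 A2 A3 := by
    rw [eq_bary_of_mem_cevians_near_edge (by omega) hind₃ hN.1 hN.2, bary_rotate, bary_rotate]
  have hn' : (4 : ℝ) ≤ n := by exact_mod_cast hn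
  rw [hI', hJ', hK', hL', hM', hN']
  exact area3_hexagon_bary (by linarith) A1 A2 A3

/-- For even n ≥ 4, the central hexagon formed by the cevians to the 1st and
(n−1)-th n-division points has area 2(n−2)²/((n+1)(2n−1)) times the triangle. -/
theorem hexagon_even (n : ℕ) (hn : 4 ≤ n) (hne : Even n)
    (A1 A2 A3 : ℝ × ℝ) (hind : detv (A2 - A1) (A3 - A1) ≠ 0)
    (I J K L M N : ℝ × ℝ)
    (hI : I ∈ lineTh A1 (divpt n 1 A2 A3) ∩ lineTh A3 (divpt n (n - 1) A1 A2))
    (hJ : J ∈ lineTh A2 (divpt n 1 A3 A1) ∩ lineTh A3 (divpt n (n - 1) A1 A2))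
    (hK : K ∈ lineTh A2 (divpt n 1 A3 A1) ∩ lineTh A1 (divpt n (n - 1) A2 A3))
    (hL : L ∈ lineTh A3 (divpt n 1 A1 A2) ∩ lineTh A1 (divpt n (n - 1) A2 A3))
    (hM : M ∈ lineTh A2 (divpt n (n - 1) A3 A1) ∩ lineTh A3 (divpt n 1 A1 A2))
    (hN : N ∈ lineTh A1 (divpt n 1 A2 A3) ∩ lineTh A2 (divpt n (n - 1) A3 A1)) :
    area3 I J K + area3 I K L + area3 I L M + area3 I M N =
      2 * ((n : ℝ) - 2) ^ 2 / (((n : ℝ) + 1) * (2 * n - 1)) * area3 A1 A2 A3 :=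
  hexagon_even_general n hn A1 A2 A3 hind I J K L M N hI hJ hK hL hM hN
end
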